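/- arXiv:2202.02674 — 6 statements merged into one kernel-verified Lean document; each statement's English description precedes it below -/
import Mathlib

section
/- Suppose ℍ satisfies the minimum value property. Then a closed subspace V of ℍ is R₁ invariant if and only if the valuation homogeneous decomposition of V is R₁ inner and has the full projection property. -/
noncomputable section

/-- The valuation subspace series: `V_k = {h ∈ V : ord h ≥ k}`. -/
def valSub {H : Type*} (ord : H → ℕ∞) (V : Set H) (k : ℕ) : Set H :=
  {h | h ∈ V ∧ (k : ℕ∞) ≤ ord h}

/-- The valuation homogeneous components: `W_k`, the orthogonal complement of
`V_{k+1}` inside `V_k`. -/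
def valHom {H : Type*} [NormedAddCommGroup H] [InnerProductSpace ℂ H]
    (ord : H → ℕ∞) (V : Set H) (k : ℕ) : Set H :=
  {h | h ∈ valSub ord V k ∧ ∀ g ∈ valSub ord V (k + 1), (inner ℂ g h : ℂ) = 0}

/-- `V` is `R₁` invariant: `r • h ∈ V` for all `r` with `ord_R r ≥ 1` and `h ∈ V`. -/
def R1Invariant {R H : Type*} [SMul R H] (ordR : R → ℕ∞) (V : Set H) : Prop :=
  ∀ r : R, 1 ≤ ordR r → ∀ h ∈ V, r • h ∈ V

/-- The valuation homogeneous decomposition of `V` is `R₁` inner. -/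
def R1InnerDecomp {R H : Type*} [NormedAddCommGroup H] [InnerProductSpace ℂ H] [SMul R H]
    (ordR : R → ℕ∞) (ord : H → ℕ∞) (V : Set H) : Prop :=
  ∀ (k m : ℕ) (r : R), 1 ≤ ordR r → ∀ h ∈ valHom ord V k, ∀ g ∈ V,
    (m : ℕ∞) < ord (r • h - g) → ∀ w ∈ valHom ord V m, (inner ℂ w (r • h - g) : ℂ) = 0

/-- The valuation homogeneous decomposition of `V` has the full projection property,
where `P m` is the orthogonal projection of `ℍ` onto `H_m`. -/
def FullProjProp {R H : Type*} [NormedAddCommGroup H] [InnerProductSpace ℂ H] [SMul R H]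
    (ordR : R → ℕ∞) (ord : H → ℕ∞) (P : ℕ → H → H) (V : Set H) : Prop :=
  ∀ (k m : ℕ) (r : R), 1 ≤ ordR r → ∀ h ∈ valHom ord V k, ∀ g ∈ V,
    (m : ℕ∞) ≤ ord (r • h - g) → P m (r • h - g) ∈ P m '' valHom ord V m

/-- `P` is the orthogonal projection onto the (sub)space `S`:
`P h ∈ S` and `h - P h ⟂ S` for every `h`. -/
def IsOrthProjOnto {H : Type*} [NormedAddCommGroup H] [InnerProductSpace ℂ H]
    (S : Set H) (P : H → H) : Prop :=
  ∀ h : H, P h ∈ S ∧ ∀ y ∈ S, (inner ℂ y (h - P h) : ℂ) = 0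

/-- The minimum value property: for every nonzero `h`, `ord h` is the least `k`
with `P k h ≠ 0`, where `P k` is the orthogonal projection of `ℍ` onto `H_k`. -/
def MinValProp {H : Type*} [Zero H] (ord : H → ℕ∞) (P : ℕ → H → H) : Prop :=
  ∀ h : H, h ≠ 0 → ∃ k : ℕ, P k h ≠ 0 ∧ (∀ j < k, P j h = 0) ∧ ord h = (k : ℕ∞)

/-!
If `V` is `R₁` invariant, then `r • h - g ∈ V_{m+1}` whenever its order exceeds `m`, which gives
innerness, and the splitting `V_m = W_m ⊕ V_{m+1}` together with `P_m V_{m+1} = 0` gives the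
full projection property.

Conversely, for `h ∈ W_k` the full projection property lets one correct an approximation
`g_m ∈ V` of `r • h` with `ord (r • h - g_m) ≥ m` by an element of `W_m`, gaining one order each
time (by the minimum value property). Innerness makes `r • h - g_i` orthogonal to every earlier
`g_m`, so `‖r • h - g_m‖` decreases and `(g_m)` is Cauchy; by upper semicontinuity its limit
`l ∈ V` satisfies `ord (r • h - l) = ⊤`, i.e. `r • h = l`. Finally the `W_k` span a dense
subspace of `V`, since an element of `V` orthogonal to all of them lies in every `V_k`.
-/

open Filter Topology Submodule
open scoped InnerProductSpace

theorem cauchySeq_of_inner_sub_eq_zero {𝕜 E : Type*} [RCLike 𝕜] [NormedAddCommGroup E]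
    [InnerProductSpace 𝕜 E] {x : E} {g : ℕ → E} (h : ∀ m i, m ≤ i → ⟪g m, x - g i⟫_𝕜 = 0) :
    CauchySeq g := by
  have pythagoras : ∀ m i, m ≤ i → ‖x - g m‖ ^ 2 = ‖x - g i‖ ^ 2 + ‖g i - g m‖ ^ 2 := by
    intro m i hmi
    have horth : ⟪x - g i, g i - g m⟫_𝕜 = 0 := by
      rw [inner_sub_right, inner_eq_zero_symm.mp (h i i le_rfl),
        inner_eq_zero_symm.mp (h m i hmi), sub_zero]
    have := norm_add_sq_eq_norm_sq_add_norm_sq_of_inner_eq_zero _ _ horth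
    rw [sub_add_sub_cancel] at this
    simpa only [sq] using this
  -- the squared distances to `x` decrease, and their decrements bound the steps of `g`
  set s : ℕ → ℝ := fun m => ‖x - g m‖ ^ 2
  have hs_anti : Antitone s := fun m i hmi => by
    simp only [s, pythagoras m i hmi]
    exact le_add_of_nonneg_right (sq_nonneg _)
  have hs : CauchySeq s :=
    (tendsto_atTop_ciInf hs_anti ⟨0, by rintro _ ⟨m, rfl⟩; positivity⟩).cauchySeq
  rw [Metric.cauchySeq_iff'] at hs ⊢
  intro ε hε
  obtain ⟨N, hN⟩ := hs (ε ^ 2) (by positivity)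
  refine ⟨N, fun n hn => ?_⟩
  have hsq : ‖g n - g N‖ ^ 2 < ε ^ 2 := by
    have := hN n hn
    rw [Real.dist_eq, abs_sub_comm, abs_of_nonneg (sub_nonneg.mpr (hs_anti hn))] at this
    linarith [pythagoras N n hn]
  rw [dist_eq_norm]
  exact lt_of_pow_lt_pow_left₀ 2 hε.le hsq

/-- The axioms of a Hilbert module valuation that do not involve the ring `R`. -/
structure IsHilbertSpaceValuation {H : Type*} [AddCommGroup H] [Module ℂ H] [TopologicalSpace H]
    (ord : H → ℕ∞) : Prop where
  eq_top_iff : ∀ h : H, ord h = ⊤ ↔ h = 0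
  smul_eq : ∀ (c : ℂ) (h : H), c ≠ 0 → ord (c • h) = ord h
  min_le_add : ∀ h₁ h₂ : H, min (ord h₁) (ord h₂) ≤ ord (h₁ + h₂)
  limsup_le : ∀ (u : ℕ → H) (h : H), Tendsto u atTop (𝓝 h) →
    limsup (fun j => ord (u j)) atTop ≤ ord h

namespace MinValProp

variable {H : Type*} [Zero H] {ord : H → ℕ∞} {P : ℕ → H → H}

theorem proj_eq_zero_of_lt_ord (hmin : MinValProp ord P) {m : ℕ} (hP0 : P m 0 = 0) {x : H}
    (hx : (m : ℕ∞) < ord x) : P m x = 0 := by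
  rcases eq_or_ne x 0 with rfl | hx0
  · exact hP0
  obtain ⟨k, -, hk, hxk⟩ := hmin x hx0
  exact hk m (by exact_mod_cast hxk ▸ hx)

theorem lt_ord_of_forall_proj_eq_zero (hmin : MinValProp ord P) (h0 : ord 0 = ⊤) {m : ℕ} {x : H}
    (hx : ∀ j ≤ m, P j x = 0) : (m : ℕ∞) < ord x := by
  rcases eq_or_ne x 0 with rfl | hx0
  · exact h0 ▸ ENat.natCast_lt_top m
  obtain ⟨k, hk, -, hxk⟩ := hmin x hx0
  rw [hxk, Nat.cast_lt]
  exact lt_of_not_ge fun hkm => hk (hx k hkm)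

end MinValProp

section InnerProductSpace

variable {H : Type*} [NormedAddCommGroup H] [InnerProductSpace ℂ H]

namespace IsHilbertSpaceValuation

variable {ord : H → ℕ∞}

theorem ord_zero (hv : IsHilbertSpaceValuation ord) : ord 0 = ⊤ :=
  (hv.eq_top_iff 0).mpr rfl

theorem le_of_tendsto (hv : IsHilbertSpaceValuation ord) {u : ℕ → H} {h : H} {k : ℕ∞}
    (hu : Tendsto u atTop (𝓝 h)) (hk : ∀ᶠ j in atTop, k ≤ ord (u j)) : k ≤ ord h :=
  (le_limsup_of_frequently_le' hk.frequently).trans (hv.limsup_le u h hu)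

def valSubmodule (hv : IsHilbertSpaceValuation ord) (V : Submodule ℂ H) (k : ℕ) :
    Submodule ℂ H where
  carrier := valSub ord V k
  add_mem' ha hb := ⟨V.add_mem ha.1 hb.1, (le_min ha.2 hb.2).trans (hv.min_le_add _ _)⟩
  zero_mem' := ⟨V.zero_mem, hv.ord_zero ▸ le_top⟩
  smul_mem' c x hx := by
    rcases eq_or_ne c 0 with rfl | hc
    · rw [zero_smul]
      exact ⟨V.zero_mem, hv.ord_zero ▸ le_top⟩
    · exact ⟨V.smul_mem c hx.1, (hv.smul_eq c x hc).symm ▸ hx.2⟩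

theorem valHom_eq_orthogonal_inf (hv : IsHilbertSpaceValuation ord) (V : Submodule ℂ H) (k : ℕ) :
    valHom ord V k = ((hv.valSubmodule V (k + 1))ᗮ ⊓ hv.valSubmodule V k : Submodule ℂ H) :=
  Set.ext fun _ => and_comm

theorem isClosed_valSubmodule (hv : IsHilbertSpaceValuation ord) {V : Submodule ℂ H}
    (hV : IsClosed (V : Set H)) (k : ℕ) : IsClosed (hv.valSubmodule V k : Set H) :=
  IsSeqClosed.isClosed fun _ _ hu hux =>
    ⟨hV.isSeqClosed (fun n => (hu n).1) hux, hv.le_of_tendsto hux (.of_forall fun n => (hu n).2)⟩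

variable [CompleteSpace H]

theorem exists_valHom_add_valSub (hv : IsHilbertSpaceValuation ord) {V : Submodule ℂ H}
    (hV : IsClosed (V : Set H)) {k : ℕ} {x : H} (hx : x ∈ valSub ord V k) :
    ∃ w ∈ valHom ord V k, ∃ v ∈ valSub ord V (k + 1), x = w + v := by
  have : CompleteSpace (hv.valSubmodule V (k + 1)) :=
    (hv.isClosed_valSubmodule hV (k + 1)).completeSpace_coe
  have hle : hv.valSubmodule V (k + 1) ≤ hv.valSubmodule V k :=
    fun y hy => ⟨hy.1, le_trans (by exact_mod_cast k.le_succ) hy.2⟩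
  have hx' : x ∈ hv.valSubmodule V k := hx
  rw [← sup_orthogonal_inf_of_hasOrthogonalProjection hle, Submodule.mem_sup] at hx'
  obtain ⟨v, hv', w, hw, rfl⟩ := hx'
  exact ⟨w, hv.valHom_eq_orthogonal_inf V k ▸ hw, v, hv', add_comm v w⟩

theorem eq_zero_of_forall_valHom_inner_eq_zero (hv : IsHilbertSpaceValuation ord)
    {V : Submodule ℂ H} (hV : IsClosed (V : Set H)) {y : H} (hy : y ∈ V)
    (h : ∀ k, ∀ w ∈ valHom ord V k, ⟪w, y⟫_ℂ = 0) : y = 0 := by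
  have hyk : ∀ k : ℕ, y ∈ valSub ord V k := by
    intro k
    induction k with
    | zero => exact ⟨hy, by simp⟩
    | succ k ih =>
      obtain ⟨w, hw, v, hv', hwv⟩ := hv.exists_valHom_add_valSub hV ih
      have hw0 : w = 0 := by
        have := h k w hw
        rw [hwv, inner_add_right, inner_eq_zero_symm.mp (hw.2 v hv'), add_zero] at this
        exact inner_self_eq_zero.mp this
      rwa [hwv, hw0, zero_add]
  exact (hv.eq_top_iff y).mp (ENat.eq_top_iff_forall_ge.mpr fun k => (hyk k).2)

theorem le_topologicalClosure_span_valHom (hv : IsHilbertSpaceValuation ord)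
    {V : Submodule ℂ H} (hV : IsClosed (V : Set H)) :
    V ≤ (span ℂ (⋃ k, valHom ord V k)).topologicalClosure := by
  set M := (span ℂ (⋃ k, valHom ord V k)).topologicalClosure
  have hMV : M ≤ V :=
    topologicalClosure_minimal _ (span_le.mpr (Set.iUnion_subset fun _ _ hw => hw.1.1)) hV
  have : CompleteSpace M := (isClosed_topologicalClosure _).completeSpace_coe
  have hperp : Mᗮ ⊓ V = ⊥ := by
    refine eq_bot_iff.mpr fun y ⟨hyM, hyV⟩ => (mem_bot ℂ).mpr ?_
    refine hv.eq_zero_of_forall_valHom_inner_eq_zero hV hyV fun k w hw => ?_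
    exact (mem_orthogonal _ _).mp hyM w
      (le_topologicalClosure _ (subset_span (Set.mem_iUnion.mpr ⟨k, hw⟩)))
  have hsup := sup_orthogonal_inf_of_hasOrthogonalProjection hMV
  rw [hperp, sup_bot_eq] at hsup
  exact hsup.ge

end IsHilbertSpaceValuation

theorem IsOrthProjOnto.map_sub {K : Submodule ℂ H} {P : H → H} (hP : IsOrthProjOnto K P)
    (a b : H) : P (a - b) = P a - P b := by
  have hd : P (a - b) - (P a - P b) ∈ K := K.sub_mem (hP _).1 (K.sub_mem (hP a).1 (hP b).1)
  have e : P (a - b) - (P a - P b) = (a - P a) - (b - P b) - ((a - b) - P (a - b)) := by abel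
  have hdd : ⟪P (a - b) - (P a - P b), P (a - b) - (P a - P b)⟫_ℂ = 0 := by
    nth_rewrite 2 [e]
    rw [inner_sub_right, inner_sub_right, (hP a).2 _ hd, (hP b).2 _ hd, (hP (a - b)).2 _ hd,
      sub_zero, sub_zero]
  exact sub_eq_zero.mp (inner_self_eq_zero.mp hdd)

section Beurling

variable {R : Type*} {ordR : R → ℕ∞} {ord : H → ℕ∞} {P : ℕ → H → H}

theorem valHom_proj_sub (hv : IsHilbertSpaceValuation ord)
    (hP : ∀ m, IsOrthProjOnto (valHom ord (Set.univ : Set H) m) (P m)) (m : ℕ) (a b : H) :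
    P m (a - b) = P m a - P m b := by
  have hPm := hP m
  rw [← Submodule.top_coe (R := ℂ), hv.valHom_eq_orthogonal_inf] at hPm
  exact hPm.map_sub a b

theorem valHom_proj_zero (hv : IsHilbertSpaceValuation ord)
    (hP : ∀ m, IsOrthProjOnto (valHom ord (Set.univ : Set H) m) (P m)) (m : ℕ) : P m 0 = 0 := by
  simpa using valHom_proj_sub hv hP m 0 0

theorem lt_ord_sub_of_proj_eq (hv : IsHilbertSpaceValuation ord)
    (hP : ∀ m, IsOrthProjOnto (valHom ord (Set.univ : Set H) m) (P m)) (hmin : MinValProp ord P)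
    {m : ℕ} {a b : H} (ha : (m : ℕ∞) ≤ ord a) (hb : (m : ℕ∞) ≤ ord b) (hab : P m a = P m b) :
    (m : ℕ∞) < ord (a - b) := by
  refine hmin.lt_ord_of_forall_proj_eq_zero hv.ord_zero fun j hj => ?_
  rw [valHom_proj_sub hv hP]
  rcases hj.lt_or_eq with hj | rfl
  · have hjm : (j : ℕ∞) < m := by exact_mod_cast hj
    rw [hmin.proj_eq_zero_of_lt_ord (valHom_proj_zero hv hP j) (hjm.trans_le ha),
      hmin.proj_eq_zero_of_lt_ord (valHom_proj_zero hv hP j) (hjm.trans_le hb), sub_zero]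
  · rw [hab, sub_self]

theorem exists_seq_sub_mem_valHom (hv : IsHilbertSpaceValuation ord)
    (hP : ∀ m, IsOrthProjOnto (valHom ord (Set.univ : Set H) m) (P m)) (hmin : MinValProp ord P)
    {V : Submodule ℂ H} {x : H}
    (hfull : ∀ m : ℕ, ∀ g ∈ V, (m : ℕ∞) ≤ ord (x - g) → P m (x - g) ∈ P m '' valHom ord V m) :
    ∃ g : ℕ → H, g 0 = 0 ∧
      ∀ m, g m ∈ V ∧ (m : ℕ∞) ≤ ord (x - g m) ∧ g (m + 1) - g m ∈ valHom ord V m := by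
  have step : ∀ (m : ℕ) (g : {g // g ∈ V ∧ (m : ℕ∞) ≤ ord (x - g)}), ∃ w ∈ valHom ord V m,
      g.1 + w ∈ V ∧ ((m + 1 : ℕ) : ℕ∞) ≤ ord (x - (g.1 + w)) := by
    rintro m ⟨g, hgV, hg⟩
    obtain ⟨w, hw, hPw⟩ := hfull m g hgV hg
    refine ⟨w, hw, V.add_mem hgV hw.1.1, ?_⟩
    rw [← sub_sub, Nat.cast_succ]
    exact Order.add_one_le_of_lt (lt_ord_sub_of_proj_eq hv hP hmin hg hw.1.2 hPw.symm)
  choose w hw hgood using step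
  let g : ∀ m : ℕ, {g // g ∈ V ∧ (m : ℕ∞) ≤ ord (x - g)} := fun m =>
    Nat.rec (motive := fun m => {g // g ∈ V ∧ (m : ℕ∞) ≤ ord (x - g)})
      ⟨0, V.zero_mem, by simp⟩ (fun m g => ⟨g.1 + w m g, hgood m g⟩) m
  refine ⟨fun m => (g m).1, rfl, fun m => ⟨(g m).2.1, (g m).2.2, ?_⟩⟩
  simpa [g] using hw m (g m)

theorem mem_of_valHom_inner_of_proj_mem (hv : IsHilbertSpaceValuation ord)
    (hP : ∀ m, IsOrthProjOnto (valHom ord (Set.univ : Set H) m) (P m)) (hmin : MinValProp ord P)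
    [CompleteSpace H] {V : Submodule ℂ H} (hV : IsClosed (V : Set H)) {x : H}
    (hinner : ∀ m : ℕ, ∀ g ∈ V, (m : ℕ∞) < ord (x - g) →
      ∀ w ∈ valHom ord V m, ⟪w, x - g⟫_ℂ = 0)
    (hfull : ∀ m : ℕ, ∀ g ∈ V, (m : ℕ∞) ≤ ord (x - g) → P m (x - g) ∈ P m '' valHom ord V m) :
    x ∈ V := by
  obtain ⟨g, hg0, hg⟩ := exists_seq_sub_mem_valHom hv hP hmin hfull
  have horth : ∀ m i, m ≤ i → ⟪g m, x - g i⟫_ℂ = 0 := by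
    intro m
    induction m with
    | zero => simp [hg0]
    | succ n ih =>
      intro i hi
      have hni : (n : ℕ∞) < ord (x - g i) := (Nat.cast_lt.mpr hi).trans_le (hg i).2.1
      rw [← sub_add_cancel (g (n + 1)) (g n), inner_add_left, ih i (by omega),
        hinner n _ (hg i).1 hni _ (hg n).2.2, zero_add]
  obtain ⟨l, hl⟩ := cauchySeq_tendsto_of_complete (cauchySeq_of_inner_sub_eq_zero horth)
  have hxl : ord (x - l) = ⊤ := ENat.eq_top_iff_forall_ge.mpr fun n =>
    hv.le_of_tendsto (tendsto_const_nhds.sub hl)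
      ((eventually_ge_atTop n).mono fun m hm => (Nat.cast_le.mpr hm).trans (hg m).2.1)
  rw [sub_eq_zero.mp ((hv.eq_top_iff _).mp hxl)]
  exact hV.mem_of_tendsto hl (.of_forall fun m => (hg m).1)

theorem R1Invariant.r1InnerDecomp [SMul R H] {V : Submodule ℂ H}
    (hinv : R1Invariant ordR (V : Set H)) : R1InnerDecomp ordR ord (V : Set H) :=
  fun _ m r hr h hh g hg hlt _ hw => inner_eq_zero_symm.mp
    (hw.2 _ ⟨V.sub_mem (hinv r hr h hh.1.1) hg, by exact_mod_cast Order.add_one_le_of_lt hlt⟩)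

theorem R1Invariant.fullProjProp [SMul R H] [CompleteSpace H] (hv : IsHilbertSpaceValuation ord)
    (hP : ∀ m, IsOrthProjOnto (valHom ord (Set.univ : Set H) m) (P m)) (hmin : MinValProp ord P)
    {V : Submodule ℂ H} (hV : IsClosed (V : Set H)) (hinv : R1Invariant ordR (V : Set H)) :
    FullProjProp ordR ord P (V : Set H) := by
  intro _ m r hr h hh g hg hle
  obtain ⟨w, hw, v, hv', hwv⟩ :=
    hv.exists_valHom_add_valSub hV ⟨V.sub_mem (hinv r hr h hh.1.1) hg, hle⟩
  have hPv : P m v = 0 :=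
    hmin.proj_eq_zero_of_lt_ord (valHom_proj_zero hv hP m)
      (lt_of_lt_of_le (by exact_mod_cast m.lt_succ_self) hv'.2)
  refine ⟨w, hw, ?_⟩
  calc P m w = P m ((w + v) - v) := by rw [add_sub_cancel_right]
    _ = P m (r • h - g) := by rw [valHom_proj_sub hv hP, hPv, sub_zero, hwv]

theorem r1Invariant_of_r1InnerDecomp_of_fullProjProp [DistribSMul R H]
    [SMulCommClass ℂ R H] [CompleteSpace H] (hv : IsHilbertSpaceValuation ord)
    (hP : ∀ m, IsOrthProjOnto (valHom ord (Set.univ : Set H) m) (P m)) (hmin : MinValProp ord P)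
    (hsmul : ∀ r : R, Continuous fun h : H => r • h)
    {V : Submodule ℂ H} (hV : IsClosed (V : Set H)) (hinner : R1InnerDecomp ordR ord (V : Set H))
    (hfull : FullProjProp ordR ord P (V : Set H)) : R1Invariant ordR (V : Set H) := by
  intro r hr x hx
  have := SMulCommClass.symm ℂ R H
  have hvalHom : ∀ k, ∀ h ∈ valHom ord V k, r • h ∈ V := fun k h hh =>
    mem_of_valHom_inner_of_proj_mem hv hP hmin hV (hinner k · r hr h hh) (hfull k · r hr h hh)
  have hclosure : (span ℂ (⋃ k, valHom ord V k)).topologicalClosure ≤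
      V.comap (DistribSMul.toLinearMap ℂ H r) :=
    topologicalClosure_minimal _ (span_le.mpr (Set.iUnion_subset hvalHom)) (hV.preimage (hsmul r))
  exact hclosure (hv.le_topologicalClosure_span_valHom hV hx)

end Beurling

end InnerProductSpace

theorem abstract_beurling_general
    {R H : Type*} [CommRing R]
    [NormedAddCommGroup H] [InnerProductSpace ℂ H] [CompleteSpace H]
    [Module R H] [SMulCommClass ℂ R H]
    (ordR : R → ℕ∞) (ord : H → ℕ∞)
    (hordtop : ∀ h : H, ord h = ⊤ ↔ h = 0)
    (hordc : ∀ (c : ℂ) (h : H), c ≠ 0 → ord (c • h) = ord h)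
    (hordadd : ∀ h₁ h₂ : H, min (ord h₁) (ord h₂) ≤ ord (h₁ + h₂))
    (hordusc : ∀ (u : ℕ → H) (h : H), Filter.Tendsto u Filter.atTop (nhds h) →
      Filter.limsup (fun j => ord (u j)) Filter.atTop ≤ ord h)
    (hsmulcont : ∀ r : R, Continuous fun h : H => r • h)
    (P : ℕ → H → H)
    (hP : ∀ m : ℕ, IsOrthProjOnto (valHom ord (Set.univ : Set H) m) (P m))
    (hmin : MinValProp ord P)
    (V : Submodule ℂ H) (hVc : IsClosed (V : Set H)) :
    R1Invariant ordR (V : Set H) ↔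
      R1InnerDecomp ordR ord (V : Set H) ∧ FullProjProp ordR ord P (V : Set H) := by
  have hv : IsHilbertSpaceValuation ord := ⟨hordtop, hordc, hordadd, hordusc⟩
  exact ⟨fun hinv => ⟨hinv.r1InnerDecomp, hinv.fullProjProp hv hP hmin hVc⟩,
    fun ⟨hinner, hfull⟩ =>
      r1Invariant_of_r1InnerDecomp_of_fullProjProp hv hP hmin hsmulcont hVc hinner hfull⟩

/-- **Abstract Beurling's theorem.** Suppose `ℍ` satisfies the minimum value property.
Then a closed subspace `V` of `ℍ` is `R₁` invariant if and only if the valuation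
homogeneous decomposition of `V` is `R₁` inner and has the full projection property. -/
theorem abstract_beurling
    {R H : Type*} [CommRing R] [Algebra ℂ R]
    [NormedAddCommGroup H] [InnerProductSpace ℂ H] [CompleteSpace H]
    [Module R H] [SMulCommClass ℂ R H] [IsScalarTower ℂ R H]
    (ordR : R → ℕ∞) (ord : H → ℕ∞)
    (hordRunit : ∀ r : R, IsUnit r → ordR r = 0)
    (hordRtop : ∀ r : R, ordR r = ⊤ ↔ r = 0)
    (hordRmul : ∀ r s : R, ordR r + ordR s ≤ ordR (r * s))
    (hordRsmul : ∀ (c : ℂ) (r : R), c ≠ 0 → ordR (c • r) = ordR r)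
    (hordRadd : ∀ r s : R, min (ordR r) (ordR s) ≤ ordR (r + s))
    (hordtop : ∀ h : H, ord h = ⊤ ↔ h = 0)
    (hordsmul : ∀ (r : R) (h : H), ordR r + ord h ≤ ord (r • h))
    (hordc : ∀ (c : ℂ) (h : H), c ≠ 0 → ord (c • h) = ord h)
    (hordadd : ∀ h₁ h₂ : H, min (ord h₁) (ord h₂) ≤ ord (h₁ + h₂))
    (hordusc : ∀ (u : ℕ → H) (h : H), Filter.Tendsto u Filter.atTop (nhds h) →
      Filter.limsup (fun j => ord (u j)) Filter.atTop ≤ ord h)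
    (hsmulcont : ∀ r : R, Continuous fun h : H => r • h)
    (P : ℕ → H → H)
    (hP : ∀ m : ℕ, IsOrthProjOnto (valHom ord (Set.univ : Set H) m) (P m))
    (hmin : MinValProp ord P)
    (V : Submodule ℂ H) (hVc : IsClosed (V : Set H)) :
    R1Invariant ordR (V : Set H) ↔
      R1InnerDecomp ordR ord (V : Set H) ∧ FullProjProp ordR ord P (V : Set H) :=
  abstract_beurling_general ordR ord hordtop hordc hordadd hordusc hsmulcont P hP hmin V hVc

end
end

section
/- A closed subspace V of ℍ is R₁ invariant if and only if for every k ∈ ℕ and every r ∈ R₁ one has r•W_k ⊆ V. -/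
noncomputable section

/-! The `V_k` are closed by upper semicontinuity of `ord`, and `V_k = V_{k+1} ⊕ W_k`. Hence a
vector of `V` orthogonal to every `W_k` lies, by induction on `k`, in every `V_k`, so it has
valuation `⊤` and vanishes. Thus the `W_k` span a dense subspace of `V`, and the continuous
ℂ-linear map `h ↦ r • h` sends its closure into `V` as soon as it sends each `W_k` into `V`. -/

open Filter Topology Submodule

theorem isClosed_setOf_le_of_limsup_le {X α : Type*} [TopologicalSpace X] [SequentialSpace X]
    [CompleteLattice α] {f : X → α}
    (hf : ∀ (u : ℕ → X) (x : X), Tendsto u atTop (𝓝 x) → limsup (fun j => f (u j)) atTop ≤ f x)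
    (a : α) : IsClosed {x | a ≤ f x} :=
  IsSeqClosed.isClosed fun _ _ hu hux =>
    (le_limsup_of_frequently_le (Frequently.of_forall hu)).trans (hf _ _ hux)

theorem Submodule.mem_of_mem_orthogonal_orthogonal_inf {𝕜 E : Type*} [RCLike 𝕜]
    [NormedAddCommGroup E] [InnerProductSpace 𝕜 E] {K₁ K₂ : Submodule 𝕜 E}
    [K₁.HasOrthogonalProjection] (h : K₁ ≤ K₂) {x : E} (hx₂ : x ∈ K₂)
    (hx : x ∈ (K₁ᗮ ⊓ K₂)ᗮ) : x ∈ K₁ := by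
  set L := K₁ᗮ ⊓ K₂
  have hP : K₁.starProjection x ∈ Lᗮ :=
    orthogonal_le inf_le_left (K₁.le_orthogonal_orthogonal (K₁.starProjection_apply_mem x))
  have hsub : x - K₁.starProjection x ∈ L ⊓ Lᗮ :=
    ⟨⟨K₁.sub_starProjection_mem_orthogonal x, K₂.sub_mem hx₂ (h (K₁.starProjection_apply_mem x))⟩,
      Lᗮ.sub_mem hx hP⟩
  rw [L.inf_orthogonal_eq_bot, mem_bot, sub_eq_zero] at hsub
  exact hsub ▸ K₁.starProjection_apply_mem x

structure IsHilbertValuation {H : Type*} [NormedAddCommGroup H] [InnerProductSpace ℂ H]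
    (ord : H → ℕ∞) : Prop where
  eq_top_iff : ∀ h : H, ord h = ⊤ ↔ h = 0
  smul_eq : ∀ (c : ℂ) (h : H), c ≠ 0 → ord (c • h) = ord h
  min_le_add : ∀ h₁ h₂ : H, min (ord h₁) (ord h₂) ≤ ord (h₁ + h₂)
  limsup_le : ∀ (u : ℕ → H) (h : H), Tendsto u atTop (𝓝 h) →
    limsup (fun j => ord (u j)) atTop ≤ ord h

namespace IsHilbertValuation

variable {H : Type*} [NormedAddCommGroup H] [InnerProductSpace ℂ H] {ord : H → ℕ∞}
  (hv : IsHilbertValuation ord)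
include hv

def superlevel (k : ℕ) : Submodule ℂ H where
  carrier := {h | (k : ℕ∞) ≤ ord h}
  add_mem' hx hy := (le_min hx hy).trans (hv.min_le_add _ _)
  zero_mem' := by simp [(hv.eq_top_iff 0).2 rfl]
  smul_mem' c x hx := by
    rcases eq_or_ne c 0 with rfl | hc
    · simp [(hv.eq_top_iff 0).2 rfl]
    · simpa [hv.smul_eq c x hc] using hx

theorem mem_superlevel {k : ℕ} {x : H} : x ∈ hv.superlevel k ↔ (k : ℕ∞) ≤ ord x := Iff.rfl

theorem superlevel_antitone : Antitone hv.superlevel := fun _ _ hkl _ hx =>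
  hv.mem_superlevel.2 ((Nat.cast_le.2 hkl).trans hx)

theorem isClosed_superlevel (k : ℕ) : IsClosed (hv.superlevel k : Set H) :=
  isClosed_setOf_le_of_limsup_le hv.limsup_le _

theorem eq_zero_of_forall_mem_superlevel {x : H} (hx : ∀ k, x ∈ hv.superlevel k) : x = 0 :=
  (hv.eq_top_iff x).1 (ENat.eq_top_iff_forall_ge.2 hx)

theorem valHom_eq (V : Submodule ℂ H) (k : ℕ) :
    valHom ord (V : Set H) k = ↑((V ⊓ hv.superlevel (k + 1))ᗮ ⊓ (V ⊓ hv.superlevel k)) :=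
  Set.ext fun _ => and_comm

variable [CompleteSpace H] {V : Submodule ℂ H}

theorem eq_zero_of_mem_orthogonal_span_valHom (hVc : IsClosed (V : Set H)) {x : H} (hxV : x ∈ V)
    (hx : x ∈ (span ℂ (⋃ k, valHom ord (V : Set H) k))ᗮ) : x = 0 := by
  refine hv.eq_zero_of_forall_mem_superlevel fun k => ?_
  induction k with
  | zero => exact hv.mem_superlevel.2 bot_le
  | succ k ih =>
    have hW : (V ⊓ hv.superlevel (k + 1))ᗮ ⊓ (V ⊓ hv.superlevel k) ≤
        span ℂ (⋃ k, valHom ord (V : Set H) k) := fun w hw =>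
      subset_span (Set.mem_iUnion.2 ⟨k, (hv.valHom_eq V k).symm ▸ hw⟩)
    have : CompleteSpace (V ⊓ hv.superlevel (k + 1) : Submodule ℂ H) :=
      (hVc.inter (hv.isClosed_superlevel _)).completeSpace_coe
    exact (mem_of_mem_orthogonal_orthogonal_inf
      (inf_le_inf_left V (hv.superlevel_antitone k.le_succ)) ⟨hxV, ih⟩ (orthogonal_le hW hx)).2

theorem le_topologicalClosure_span_valHom (hVc : IsClosed (V : Set H)) :
    V ≤ (span ℂ (⋃ k, valHom ord (V : Set H) k)).topologicalClosure := by
  set S := span ℂ (⋃ k, valHom ord (V : Set H) k)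
  have hSV : S ≤ V := span_le.2 (Set.iUnion_subset fun k _ hx => hx.1.1)
  have hbot : Sᗮ ⊓ V = ⊥ :=
    eq_bot_iff.2 fun x hx => mem_bot ℂ |>.2 (hv.eq_zero_of_mem_orthogonal_span_valHom hVc hx.2 hx.1)
  have hsup := sup_orthogonal_inf_of_hasOrthogonalProjection (S.topologicalClosure_minimal hSV hVc)
  rw [orthogonal_closure, hbot, sup_bot_eq] at hsup
  exact hsup.ge

end IsHilbertValuation

theorem r1Invariant_iff_smul_valHom_subset_general
    {R H : Type*} [CommRing R]
    [NormedAddCommGroup H] [InnerProductSpace ℂ H] [CompleteSpace H]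
    [Module R H] [SMulCommClass ℂ R H]
    (ordR : R → ℕ∞) (ord : H → ℕ∞)
    (hordtop : ∀ h : H, ord h = ⊤ ↔ h = 0)
    (hordc : ∀ (c : ℂ) (h : H), c ≠ 0 → ord (c • h) = ord h)
    (hordadd : ∀ h₁ h₂ : H, min (ord h₁) (ord h₂) ≤ ord (h₁ + h₂))
    (hordusc : ∀ (u : ℕ → H) (h : H), Filter.Tendsto u Filter.atTop (nhds h) →
      Filter.limsup (fun j => ord (u j)) Filter.atTop ≤ ord h)
    (hsmulcont : ∀ r : R, Continuous fun h : H => r • h)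
    (V : Submodule ℂ H) (hVc : IsClosed (V : Set H)) :
    R1Invariant ordR (V : Set H) ↔
      ∀ (k : ℕ) (r : R), 1 ≤ ordR r → ∀ h ∈ valHom ord (V : Set H) k,
        r • h ∈ (V : Set H) := by
  refine ⟨fun hV k r hr h hh => hV r hr h hh.1.1, fun hW r hr => ?_⟩
  have hv : IsHilbertValuation ord := ⟨hordtop, hordc, hordadd, hordusc⟩
  have := SMulCommClass.symm ℂ R H
  let f : H →ₗ[ℂ] H := DistribSMul.toLinearMap ℂ H r
  have hspan : span ℂ (⋃ k, valHom ord (V : Set H) k) ≤ V.comap f :=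
    span_le.2 (Set.iUnion_subset fun k h hh => mem_comap.2 (hW k r hr h hh))
  exact (hv.le_topologicalClosure_span_valHom hVc).trans
    (topologicalClosure_minimal _ hspan (hVc.preimage (hsmulcont r)))

/-- A closed subspace `V` of `ℍ` is `R₁` invariant if and only if for every `k ∈ ℕ`
and every `r ∈ R₁` one has `r • W_k ⊆ V`. -/
theorem r1Invariant_iff_smul_valHom_subset
    {R H : Type*} [CommRing R] [Algebra ℂ R]
    [NormedAddCommGroup H] [InnerProductSpace ℂ H] [CompleteSpace H]
    [Module R H] [SMulCommClass ℂ R H] [IsScalarTower ℂ R H]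
    (ordR : R → ℕ∞) (ord : H → ℕ∞)
    (hordRunit : ∀ r : R, IsUnit r → ordR r = 0)
    (hordRtop : ∀ r : R, ordR r = ⊤ ↔ r = 0)
    (hordRmul : ∀ r s : R, ordR r + ordR s ≤ ordR (r * s))
    (hordRsmul : ∀ (c : ℂ) (r : R), c ≠ 0 → ordR (c • r) = ordR r)
    (hordRadd : ∀ r s : R, min (ordR r) (ordR s) ≤ ordR (r + s))
    (hordtop : ∀ h : H, ord h = ⊤ ↔ h = 0)
    (hordsmul : ∀ (r : R) (h : H), ordR r + ord h ≤ ord (r • h))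
    (hordc : ∀ (c : ℂ) (h : H), c ≠ 0 → ord (c • h) = ord h)
    (hordadd : ∀ h₁ h₂ : H, min (ord h₁) (ord h₂) ≤ ord (h₁ + h₂))
    (hordusc : ∀ (u : ℕ → H) (h : H), Filter.Tendsto u Filter.atTop (nhds h) →
      Filter.limsup (fun j => ord (u j)) Filter.atTop ≤ ord h)
    (hsmulcont : ∀ r : R, Continuous fun h : H => r • h)
    (V : Submodule ℂ H) (hVc : IsClosed (V : Set H)) :
    R1Invariant ordR (V : Set H) ↔
      ∀ (k : ℕ) (r : R), 1 ≤ ordR r → ∀ h ∈ valHom ord (V : Set H) k,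
        r • h ∈ (V : Set H) :=
  r1Invariant_iff_smul_valHom_subset_general ordR ord hordtop hordc hordadd hordusc hsmulcont V hVc
end
end

section
/- (Second projection lemma.) Suppose the valuation homogeneous decomposition of the closed subspace V is R₁ inner. Let r ∈ R₁, k ∈ ℕ, h ∈ W_k, and let g_j ∈ W_j for every j ∈ ℕ; set f_m = g_0 + g_1 + ⋯ + g_m. If ord(r•h − f_m) > m for every m ∈ ℕ, then the series Σ_j g_j converges in norm to an element f ∈ V, and r•h = f. -/
noncomputable section

/-!
The `R₁`-inner property makes `r • h - f_m` orthogonal to `g_0, …, g_m`, hence to `f_m`, so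
`‖f_m‖ ≤ ‖r • h‖`. Since the components `W_j` are mutually orthogonal, `‖f_m‖² = Σ_{j ≤ m} ‖g_j‖²`,
so `Σ ‖g_j‖²` converges and therefore so does `Σ g_j`, to some `f` in the closed space `V`.
Finally `ord (r • h - f_m) > m` tends to `∞`, and upper semicontinuity of `ord` forces
`ord (r • h - f) = ∞`, i.e. `r • h = f`.
-/

open Filter Topology
open scoped InnerProductSpace

section PairwiseOrthogonal

variable {𝕜 E ι : Type*} [RCLike 𝕜] [NormedAddCommGroup E] [InnerProductSpace 𝕜 E]

theorem orthogonalFamily_span_singleton {v : ι → E} (hv : Pairwise fun i j => ⟪v i, v j⟫_𝕜 = 0) :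
    OrthogonalFamily 𝕜 (fun i => 𝕜 ∙ v i) fun i => (𝕜 ∙ v i).subtypeₗᵢ := by
  rintro i j hij ⟨x, hx⟩ ⟨y, hy⟩
  obtain ⟨a, rfl⟩ := Submodule.mem_span_singleton.mp hx
  obtain ⟨b, rfl⟩ := Submodule.mem_span_singleton.mp hy
  simp [inner_smul_left, inner_smul_right, hv hij]

theorem norm_sum_sq_of_pairwise_inner_eq_zero {v : ι → E}
    (hv : Pairwise fun i j => ⟪v i, v j⟫_𝕜 = 0) (s : Finset ι) :
    ‖∑ i ∈ s, v i‖ ^ 2 = ∑ i ∈ s, ‖v i‖ ^ 2 :=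
  (orthogonalFamily_span_singleton hv).norm_sum
    (fun i => ⟨v i, Submodule.mem_span_singleton_self _⟩) s

theorem summable_of_pairwise_inner_eq_zero [CompleteSpace E] {v : ι → E}
    (hv : Pairwise fun i j => ⟪v i, v j⟫_𝕜 = 0) (hsq : Summable fun i => ‖v i‖ ^ 2) :
    Summable v :=
  ((orthogonalFamily_span_singleton hv).summable_iff_norm_sq_summable
    (fun i => ⟨v i, Submodule.mem_span_singleton_self _⟩)).mpr hsq

theorem norm_le_of_inner_sub_eq_zero {x y : E} (h : ⟪y, x - y⟫_𝕜 = 0) : ‖y‖ ≤ ‖x‖ := by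
  have hpyth := norm_add_sq_eq_norm_sq_add_norm_sq_of_inner_eq_zero y (x - y) h
  rw [add_sub_cancel] at hpyth
  exact mul_self_le_mul_self_iff (norm_nonneg y) (norm_nonneg x) |>.mpr
    (hpyth ▸ le_add_of_nonneg_right (mul_self_nonneg _))

end PairwiseOrthogonal

theorem inner_eq_zero_of_mem_valHom {H : Type*} [NormedAddCommGroup H] [InnerProductSpace ℂ H]
    {ord : H → ℕ∞} {V : Set H} {i j : ℕ} {x y : H} (hij : i ≠ j)
    (hx : x ∈ valHom ord V i) (hy : y ∈ valHom ord V j) : ⟪x, y⟫_ℂ = 0 := by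
  rcases hij.lt_or_gt with hlt | hgt
  · have hyx : ⟪y, x⟫_ℂ = 0 := hx.2 y ⟨hy.1.1, le_trans (by exact_mod_cast hlt) hy.1.2⟩
    rw [← inner_conj_symm, hyx, map_zero]
  · exact hy.2 x ⟨hx.1.1, le_trans (by exact_mod_cast hgt) hx.1.2⟩

theorem ENat.limsup_eq_top_of_natCast_lt {a : ℕ → ℕ∞} (ha : ∀ m : ℕ, (m : ℕ∞) < a m) :
    limsup a atTop = ⊤ := by
  refine Tendsto.limsup_eq (ENat.tendsto_nhds_top_iff_natCast_lt.mpr fun n => ?_)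
  filter_upwards [eventually_ge_atTop n] with m hm
  exact lt_of_le_of_lt (by exact_mod_cast hm) (ha m)

theorem second_projection_lemma_general
    {R H : Type*} [CommRing R]
    [NormedAddCommGroup H] [InnerProductSpace ℂ H] [CompleteSpace H]
    [Module R H]
    (ordR : R → ℕ∞) (ord : H → ℕ∞)
    (hordtop : ∀ h : H, ord h = ⊤ ↔ h = 0)
    (hordusc : ∀ (u : ℕ → H) (h : H), Filter.Tendsto u Filter.atTop (nhds h) →
      Filter.limsup (fun j => ord (u j)) Filter.atTop ≤ ord h)
    (V : Submodule ℂ H) (hVc : IsClosed (V : Set H))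
    (hinner : R1InnerDecomp ordR ord (V : Set H))
    (r : R) (hr : 1 ≤ ordR r) (k : ℕ)
    (h : H) (hh : h ∈ valHom ord (V : Set H) k)
    (g : ℕ → H) (hg : ∀ j : ℕ, g j ∈ valHom ord (V : Set H) j)
    (hord : ∀ m : ℕ, (m : ℕ∞) < ord (r • h - ∑ j ∈ Finset.range (m + 1), g j)) :
    ∃ f ∈ (V : Set H),
      Filter.Tendsto (fun m : ℕ => ∑ j ∈ Finset.range (m + 1), g j)
        Filter.atTop (nhds f) ∧ r • h = f := by
  set f : ℕ → H := fun m => ∑ j ∈ Finset.range (m + 1), g j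
  have hfV (m : ℕ) : f m ∈ V := V.sum_mem fun j _ => (hg j).1.1
  have horth : Pairwise fun i j => ⟪g i, g j⟫_ℂ = 0 :=
    fun i j hij => inner_eq_zero_of_mem_valHom hij (hg i) (hg j)
  have hperp (m : ℕ) : ⟪f m, r • h - f m⟫_ℂ = 0 := by
    refine (sum_inner _ _ _).trans (Finset.sum_eq_zero fun j hj => ?_)
    have hjm : (j : ℕ∞) < ord (r • h - f m) :=
      lt_of_le_of_lt (by exact_mod_cast Finset.mem_range_succ_iff.mp hj) (hord m)
    exact hinner k j r hr h hh (f m) (hfV m) hjm (g j) (hg j)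
  have hbound (m : ℕ) : ∑ j ∈ Finset.range (m + 1), ‖g j‖ ^ 2 ≤ ‖r • h‖ ^ 2 := by
    rw [← norm_sum_sq_of_pairwise_inner_eq_zero horth]
    gcongr
    exact norm_le_of_inner_sub_eq_zero (hperp m)
  have hsq : Summable fun j => ‖g j‖ ^ 2 :=
    summable_of_sum_range_le (fun j => sq_nonneg _) fun n =>
      le_trans (by rw [Finset.sum_range_succ]; exact le_add_of_nonneg_right (sq_nonneg _))
        (hbound n)
  have hlim : Tendsto f atTop (𝓝 (∑' j, g j)) :=
    (summable_of_pairwise_inner_eq_zero horth hsq).hasSum.tendsto_sum_nat.comp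
      (tendsto_add_atTop_nat 1)
  refine ⟨∑' j, g j, hVc.mem_of_tendsto hlim (.of_forall hfV), hlim, ?_⟩
  have hord_eq_top : ⊤ ≤ ord (r • h - ∑' j, g j) :=
    ENat.limsup_eq_top_of_natCast_lt hord ▸ hordusc _ _ (hlim.const_sub (r • h))
  exact sub_eq_zero.mp ((hordtop _).mp (top_le_iff.mp hord_eq_top))

/-- **Second projection lemma.** Suppose the valuation homogeneous decomposition of the
closed subspace `V` is `R₁` inner.  If `g j ∈ W_j` for every `j` and
`ord (r • h - (g 0 + ⋯ + g m)) > m` for every `m`, then the series `Σ g j` converges in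
norm to an element `f ∈ V` and `r • h = f`. -/
theorem second_projection_lemma
    {R H : Type*} [CommRing R] [Algebra ℂ R]
    [NormedAddCommGroup H] [InnerProductSpace ℂ H] [CompleteSpace H]
    [Module R H] [SMulCommClass ℂ R H] [IsScalarTower ℂ R H]
    (ordR : R → ℕ∞) (ord : H → ℕ∞)
    (hordRunit : ∀ r : R, IsUnit r → ordR r = 0)
    (hordRtop : ∀ r : R, ordR r = ⊤ ↔ r = 0)
    (hordRmul : ∀ r s : R, ordR r + ordR s ≤ ordR (r * s))
    (hordRsmul : ∀ (c : ℂ) (r : R), c ≠ 0 → ordR (c • r) = ordR r)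
    (hordRadd : ∀ r s : R, min (ordR r) (ordR s) ≤ ordR (r + s))
    (hordtop : ∀ h : H, ord h = ⊤ ↔ h = 0)
    (hordsmul : ∀ (r : R) (h : H), ordR r + ord h ≤ ord (r • h))
    (hordc : ∀ (c : ℂ) (h : H), c ≠ 0 → ord (c • h) = ord h)
    (hordadd : ∀ h₁ h₂ : H, min (ord h₁) (ord h₂) ≤ ord (h₁ + h₂))
    (hordusc : ∀ (u : ℕ → H) (h : H), Filter.Tendsto u Filter.atTop (nhds h) →
      Filter.limsup (fun j => ord (u j)) Filter.atTop ≤ ord h)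
    (hsmulcont : ∀ r : R, Continuous fun h : H => r • h)
    (V : Submodule ℂ H) (hVc : IsClosed (V : Set H))
    (hinner : R1InnerDecomp ordR ord (V : Set H))
    (r : R) (hr : 1 ≤ ordR r) (k : ℕ)
    (h : H) (hh : h ∈ valHom ord (V : Set H) k)
    (g : ℕ → H) (hg : ∀ j : ℕ, g j ∈ valHom ord (V : Set H) j)
    (hord : ∀ m : ℕ, (m : ℕ∞) < ord (r • h - ∑ j ∈ Finset.range (m + 1), g j)) :
    ∃ f ∈ (V : Set H),
      Filter.Tendsto (fun m : ℕ => ∑ j ∈ Finset.range (m + 1), g j)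
        Filter.atTop (nhds f) ∧ r • h = f :=
  second_projection_lemma_general ordR ord hordtop hordusc V hVc hinner r hr k h hh g hg hord
end
end

section
/- (Third projection lemma.) Suppose ℍ satisfies the minimum value property. Let W ≠ {0} be a closed subspace of ℍ on which ord is constant on W ∖ {0}, with common value m ∈ ℕ. Then the restriction of P_m^ℍ to W is a bounded linear map from W into H_m with trivial kernel (i.e., it is injective). -/
noncomputable section

theorem MinValProp.apply_ne_zero_of_ord_eq {H : Type*} [Zero H] {ord : H → ℕ∞}
    {P : ℕ → H → H} (hmin : MinValProp ord P) {h : H} (hh : h ≠ 0) {m : ℕ}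
    (hm : ord h = m) : P m h ≠ 0 := by
  obtain ⟨k, hk, -, hkord⟩ := hmin h hh
  obtain rfl : k = m := by exact_mod_cast hkord.symm.trans hm
  exact hk

theorem third_projection_lemma_general
    {H : Type*}
    [NormedAddCommGroup H] [InnerProductSpace ℂ H]
    (ord : H → ℕ∞)
    (P : ℕ → H →L[ℂ] H)
    (hP : ∀ m : ℕ, IsOrthProjOnto (valHom ord (Set.univ : Set H) m) (P m))
    (hmin : MinValProp ord fun m => ⇑(P m))
    (W : Submodule ℂ H)
    (m : ℕ) (hWm : ∀ h ∈ W, h ≠ 0 → ord h = (m : ℕ∞)) :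
    (∀ h ∈ W, P m h ∈ valHom ord (Set.univ : Set H) m) ∧
      Set.InjOn (⇑(P m)) (W : Set H) := by
  refine ⟨fun h _ => (hP m h).1, ?_⟩
  refine LinearMap.injOn_of_disjoint_ker (f := (P m).toLinearMap) subset_rfl ?_
  rw [LinearMap.disjoint_ker]
  intro h hW hPh
  by_contra hne
  exact hmin.apply_ne_zero_of_ord_eq hne (hWm h hW hne) hPh

/-- **Third projection lemma.** Suppose `ℍ` satisfies the minimum value property.  If
`W ≠ {0}` is a closed subspace of `ℍ` on which `ord` is constant, with common value `m`,
on `W \ {0}`, then the restriction to `W` of the orthogonal projection `P m` (a bounded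
linear map) maps `W` into `H_m` and is injective. -/
theorem third_projection_lemma
    {R H : Type*} [CommRing R] [Algebra ℂ R]
    [NormedAddCommGroup H] [InnerProductSpace ℂ H] [CompleteSpace H]
    [Module R H] [SMulCommClass ℂ R H] [IsScalarTower ℂ R H]
    (ordR : R → ℕ∞) (ord : H → ℕ∞)
    (hordRunit : ∀ r : R, IsUnit r → ordR r = 0)
    (hordRtop : ∀ r : R, ordR r = ⊤ ↔ r = 0)
    (hordRmul : ∀ r s : R, ordR r + ordR s ≤ ordR (r * s))
    (hordRsmul : ∀ (c : ℂ) (r : R), c ≠ 0 → ordR (c • r) = ordR r)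
    (hordRadd : ∀ r s : R, min (ordR r) (ordR s) ≤ ordR (r + s))
    (hordtop : ∀ h : H, ord h = ⊤ ↔ h = 0)
    (hordsmul : ∀ (r : R) (h : H), ordR r + ord h ≤ ord (r • h))
    (hordc : ∀ (c : ℂ) (h : H), c ≠ 0 → ord (c • h) = ord h)
    (hordadd : ∀ h₁ h₂ : H, min (ord h₁) (ord h₂) ≤ ord (h₁ + h₂))
    (hordusc : ∀ (u : ℕ → H) (h : H), Filter.Tendsto u Filter.atTop (nhds h) →
      Filter.limsup (fun j => ord (u j)) Filter.atTop ≤ ord h)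
    (hsmulcont : ∀ r : R, Continuous fun h : H => r • h)
    (P : ℕ → H →L[ℂ] H)
    (hP : ∀ m : ℕ, IsOrthProjOnto (valHom ord (Set.univ : Set H) m) (P m))
    (hmin : MinValProp ord fun m => ⇑(P m))
    (W : Submodule ℂ H) (hWc : IsClosed (W : Set H)) (hW : W ≠ ⊥)
    (m : ℕ) (hWm : ∀ h ∈ W, h ≠ 0 → ord h = (m : ℕ∞)) :
    (∀ h ∈ W, P m h ∈ valHom ord (Set.univ : Set H) m) ∧
      Set.InjOn (⇑(P m)) (W : Set H) :=
  third_projection_lemma_general ord P hP hmin W m hWm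
end
end

section
/- Let V be a closed subspace of ℍ with valuation homogeneous components W_k. Then the closure of the linear span of ⋃_{k ∈ ℕ} W_k equals V; equivalently, if h ∈ V is orthogonal to W_k for every k ∈ ℕ, then h = 0. -/
/-!
Upper semicontinuity of `ord` makes every `V_k` a closed subspace, so `V_n` splits orthogonally
as `V_{n+1} ⊕ W_n`. A nonzero `h ∈ V` has finite order `n`; if it is orthogonal to `W_n`, the
splitting puts it in `V_{n+1}`, contradicting `ord h = n`. Density of the span of the `W_k` in `V`
follows by applying this to the component of a vector orthogonal to the closure of the span.
-/

noncomputable section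

namespace Submodule

variable {𝕜 E : Type*} [RCLike 𝕜] [NormedAddCommGroup E] [InnerProductSpace 𝕜 E]

theorem mem_of_forall_inner_orthogonal_inf_eq_zero {K U : Submodule 𝕜 E}
    [K.HasOrthogonalProjection] (hKU : K ≤ U) {x : E} (hx : x ∈ U)
    (horth : ∀ w ∈ Kᗮ ⊓ U, inner 𝕜 w x = 0) : x ∈ K := by
  rw [← sup_orthogonal_inf_of_hasOrthogonalProjection hKU] at hx
  obtain ⟨y, hy, z, hz, rfl⟩ := mem_sup.1 hx
  have hzz := horth z hz
  rw [inner_add_right, inner_left_of_mem_orthogonal hy hz.1, zero_add] at hzz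
  rwa [inner_self_eq_zero.1 hzz, add_zero]

theorem closure_span_eq_of_forall_inner_eq_zero [CompleteSpace E] {S : Set E}
    {V : Submodule 𝕜 E} (hSV : S ⊆ V) (hV : IsClosed (V : Set E))
    (hS : ∀ x ∈ V, (∀ w ∈ S, inner 𝕜 w x = 0) → x = 0) :
    closure (span 𝕜 S : Set E) = V := by
  set M := (span 𝕜 S).topologicalClosure
  have : CompleteSpace M := (isClosed_topologicalClosure _).completeSpace_coe
  have hMV : M ≤ V := topologicalClosure_minimal _ (span_le.2 hSV) hV
  rw [← topologicalClosure_coe]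
  refine le_antisymm hMV fun x hx => mem_of_forall_inner_orthogonal_inf_eq_zero hMV hx ?_
  rintro w ⟨hwM, hwV⟩
  have hwS : ∀ s ∈ S, inner 𝕜 s w = 0 := fun s hs =>
    inner_right_of_mem_orthogonal (le_topologicalClosure _ (subset_span hs)) hwM
  rw [hS w hwV hwS, inner_zero_left]

end Submodule

/-- The properties of `ord` that make each `V_k` a vector subspace. -/
structure IsModuleValuation (𝕜 : Type*) {E : Type*} [Field 𝕜] [AddCommGroup E] [Module 𝕜 E]
    (ord : E → ℕ∞) : Prop where
  map_zero : ord 0 = ⊤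
  map_smul : ∀ (c : 𝕜) (h : E), c ≠ 0 → ord (c • h) = ord h
  min_le_map_add : ∀ h₁ h₂ : E, min (ord h₁) (ord h₂) ≤ ord (h₁ + h₂)

namespace IsModuleValuation

variable {𝕜 E : Type*} [Field 𝕜] [AddCommGroup E] [Module 𝕜 E] {ord : E → ℕ∞}

def valSubmodule (hord : IsModuleValuation 𝕜 ord) (V : Submodule 𝕜 E) (k : ℕ) :
    Submodule 𝕜 E where
  carrier := valSub ord V k
  add_mem' := fun ⟨haV, hak⟩ ⟨hbV, hbk⟩ =>
    ⟨V.add_mem haV hbV, (le_min hak hbk).trans (hord.min_le_map_add _ _)⟩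
  zero_mem' := ⟨V.zero_mem, hord.map_zero ▸ le_top⟩
  smul_mem' c x := fun ⟨hxV, hxk⟩ => by
    refine ⟨V.smul_mem c hxV, ?_⟩
    rcases eq_or_ne c 0 with rfl | hc
    · rw [zero_smul, hord.map_zero]; exact le_top
    · rwa [hord.map_smul c x hc]

end IsModuleValuation

theorem valSub_succ_subset {E : Type*} (ord : E → ℕ∞) (V : Set E) (k : ℕ) :
    valSub ord V (k + 1) ⊆ valSub ord V k :=
  fun _ ⟨hV, hk⟩ => ⟨hV, le_trans (by exact_mod_cast k.le_succ) hk⟩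

theorem isClosed_valSub {E : Type*} [TopologicalSpace E] [SequentialSpace E] {ord : E → ℕ∞}
    (husc : ∀ (u : ℕ → E) (h : E), Filter.Tendsto u Filter.atTop (nhds h) →
      Filter.limsup (fun j => ord (u j)) Filter.atTop ≤ ord h)
    {V : Set E} (hV : IsClosed V) (k : ℕ) : IsClosed (valSub ord V k) :=
  IsSeqClosed.isClosed fun {u h} hu hlim =>
    ⟨hV.isSeqClosed (fun j => (hu j).1) hlim,
      (Filter.le_limsup_of_frequently_le (Filter.Frequently.of_forall fun j => (hu j).2)).trans
        (husc u h hlim)⟩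

theorem valHom_eq_orthogonal_inf {H : Type*} [NormedAddCommGroup H] [InnerProductSpace ℂ H]
    {ord : H → ℕ∞} (hord : IsModuleValuation ℂ ord) (V : Submodule ℂ H) (k : ℕ) :
    valHom ord V k = ((hord.valSubmodule V (k + 1))ᗮ ⊓ hord.valSubmodule V k : Set H) :=
  Set.ext fun _ => and_comm

/-- A vector of finite order `n` orthogonal to `W_n` already lies in `V_{n+1}`. -/
theorem eq_zero_of_forall_inner_valHom_eq_zero {H : Type*} [NormedAddCommGroup H]
    [InnerProductSpace ℂ H] [CompleteSpace H] {ord : H → ℕ∞} (hord : IsModuleValuation ℂ ord)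
    (heq_top : ∀ h : H, ord h = ⊤ → h = 0)
    (husc : ∀ (u : ℕ → H) (h : H), Filter.Tendsto u Filter.atTop (nhds h) →
      Filter.limsup (fun j => ord (u j)) Filter.atTop ≤ ord h)
    {V : Submodule ℂ H} (hV : IsClosed (V : Set H)) {h : H} (hh : h ∈ V)
    (horth : ∀ (k : ℕ), ∀ w ∈ valHom ord (V : Set H) k, (inner ℂ w h : ℂ) = 0) : h = 0 := by
  by_contra hne
  obtain ⟨n, hn⟩ := WithTop.ne_top_iff_exists.1 (mt (heq_top h) hne)
  have : CompleteSpace (hord.valSubmodule V (n + 1)) :=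
    (isClosed_valSub husc hV (n + 1)).completeSpace_coe
  have hmem : h ∈ hord.valSubmodule V (n + 1) :=
    Submodule.mem_of_forall_inner_orthogonal_inf_eq_zero (valSub_succ_subset ord V n)
      (show h ∈ hord.valSubmodule V n from ⟨hh, hn.le⟩)
      fun w hw => horth n w ((valHom_eq_orthogonal_inf hord V n).symm ▸ hw)
  exact n.not_succ_le_self (ENat.natCast_le_natCast.1 (hmem.2.trans hn.ge))

theorem valHom_decomposition_spans_general
    {H : Type*}
    [NormedAddCommGroup H] [InnerProductSpace ℂ H] [CompleteSpace H]
    (ord : H → ℕ∞)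
    (hordtop : ∀ h : H, ord h = ⊤ ↔ h = 0)
    (hordc : ∀ (c : ℂ) (h : H), c ≠ 0 → ord (c • h) = ord h)
    (hordadd : ∀ h₁ h₂ : H, min (ord h₁) (ord h₂) ≤ ord (h₁ + h₂))
    (hordusc : ∀ (u : ℕ → H) (h : H), Filter.Tendsto u Filter.atTop (nhds h) →
      Filter.limsup (fun j => ord (u j)) Filter.atTop ≤ ord h)
    (V : Submodule ℂ H) (hVc : IsClosed (V : Set H)) :
    closure ((Submodule.span ℂ (⋃ k : ℕ, valHom ord (V : Set H) k) : Submodule ℂ H) : Set H)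
        = (V : Set H) ∧
      ∀ h ∈ V, (∀ (k : ℕ), ∀ w ∈ valHom ord (V : Set H) k, (inner ℂ w h : ℂ) = 0) → h = 0 := by
  have hord : IsModuleValuation ℂ ord := ⟨(hordtop 0).2 rfl, hordc, hordadd⟩
  have horth_eq_zero : ∀ h ∈ V, (∀ (k : ℕ), ∀ w ∈ valHom ord (V : Set H) k,
      (inner ℂ w h : ℂ) = 0) → h = 0 := fun h hh =>
    eq_zero_of_forall_inner_valHom_eq_zero hord (fun h => (hordtop h).1) hordusc hVc hh
  refine ⟨Submodule.closure_span_eq_of_forall_inner_eq_zero ?_ hVc ?_, horth_eq_zero⟩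
  · exact Set.iUnion_subset fun k _ hw => hw.1.1
  · intro h hh horth
    exact horth_eq_zero h hh fun k w hw => horth w (Set.mem_iUnion.2 ⟨k, hw⟩)

/-- The valuation homogeneous decomposition of a closed subspace `V` spans `V`: the
closure of the linear span of `⋃ k, W_k` equals `V`; equivalently, any `h ∈ V`
orthogonal to every `W_k` is `0`. -/
theorem valHom_decomposition_spans
    {R H : Type*} [CommRing R] [Algebra ℂ R]
    [NormedAddCommGroup H] [InnerProductSpace ℂ H] [CompleteSpace H]
    [Module R H] [SMulCommClass ℂ R H] [IsScalarTower ℂ R H]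
    (ordR : R → ℕ∞) (ord : H → ℕ∞)
    (hordRunit : ∀ r : R, IsUnit r → ordR r = 0)
    (hordRtop : ∀ r : R, ordR r = ⊤ ↔ r = 0)
    (hordRmul : ∀ r s : R, ordR r + ordR s ≤ ordR (r * s))
    (hordRsmul : ∀ (c : ℂ) (r : R), c ≠ 0 → ordR (c • r) = ordR r)
    (hordRadd : ∀ r s : R, min (ordR r) (ordR s) ≤ ordR (r + s))
    (hordtop : ∀ h : H, ord h = ⊤ ↔ h = 0)
    (hordsmul : ∀ (r : R) (h : H), ordR r + ord h ≤ ord (r • h))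
    (hordc : ∀ (c : ℂ) (h : H), c ≠ 0 → ord (c • h) = ord h)
    (hordadd : ∀ h₁ h₂ : H, min (ord h₁) (ord h₂) ≤ ord (h₁ + h₂))
    (hordusc : ∀ (u : ℕ → H) (h : H), Filter.Tendsto u Filter.atTop (nhds h) →
      Filter.limsup (fun j => ord (u j)) Filter.atTop ≤ ord h)
    (hsmulcont : ∀ r : R, Continuous fun h : H => r • h)
    (V : Submodule ℂ H) (hVc : IsClosed (V : Set H)) :
    closure ((Submodule.span ℂ (⋃ k : ℕ, valHom ord (V : Set H) k) : Submodule ℂ H) : Set H)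
        = (V : Set H) ∧
      ∀ h ∈ V, (∀ (k : ℕ), ∀ w ∈ valHom ord (V : Set H) k, (inner ℂ w h : ℂ) = 0) → h = 0 :=
  valHom_decomposition_spans_general ord hordtop hordc hordadd hordusc V hVc
end
end

section
/- (Upper semicontinuity of the order of vanishing.) Let U ⊆ ℂ be open, a ∈ U, and let f and f_j (j ∈ ℕ) be analytic functions on U such that f_j → f uniformly on every compact subset of U. Then limsup_j ord_a(f_j) ≤ ord_a(f) in ℕ∞. -/
/-!
Locally uniform convergence of holomorphic functions carries over to all derivatives
(Weierstrass), so if the `n`-th derivative of the limit `f` at `a` is nonzero, where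
`n = ord_a f`, then the `n`-th derivatives of the `f j` at `a` are eventually nonzero, which
forces `ord_a (f j) ≤ n` eventually.
-/

open Filter

theorem analyticOrderAt_le_of_iteratedDeriv_ne_zero {𝕜 E : Type*} [NontriviallyNormedField 𝕜]
    [CharZero 𝕜] [NormedAddCommGroup E] [NormedSpace 𝕜 E] [CompleteSpace E] {f : 𝕜 → E}
    {z : 𝕜} (hf : AnalyticAt 𝕜 f z) {n : ℕ} (h : iteratedDeriv n f z ≠ 0) :
    analyticOrderAt f z ≤ n := by
  by_contra! hlt
  have hle : ((n + 1 : ℕ) : ℕ∞) ≤ analyticOrderAt f z := by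
    simpa using Order.add_one_le_of_lt hlt
  exact h ((natCast_le_analyticOrderAt_iff_iteratedDeriv_eq_zero hf).mp hle n n.lt_succ_self)

section LocallyUniformLimit

variable {ι E : Type*} [NormedAddCommGroup E] [NormedSpace ℂ E] [CompleteSpace E]
  {φ : Filter ι} {F : ι → ℂ → E} {f : ℂ → E} {U : Set ℂ}

theorem TendstoLocallyUniformlyOn.iteratedDeriv (hf : TendstoLocallyUniformlyOn F f φ U)
    (hF : ∀ᶠ n in φ, DifferentiableOn ℂ (F n) U) (hU : IsOpen U) (k : ℕ) :
    TendstoLocallyUniformlyOn (fun n => iteratedDeriv k (F n)) (iteratedDeriv k f) φ U := by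
  induction k generalizing F f with
  | zero => simpa using hf
  | succ k ih =>
    simp only [iteratedDeriv_succ']
    exact ih (hf.deriv hF hU) (hF.mono fun n hn => hn.deriv hU)

theorem TendstoLocallyUniformlyOn.eventually_analyticOrderAt_le [φ.NeBot]
    (hf : TendstoLocallyUniformlyOn F f φ U) (hF : ∀ᶠ n in φ, DifferentiableOn ℂ (F n) U)
    (hU : IsOpen U) {a : ℂ} (ha : a ∈ U) :
    ∀ᶠ n in φ, analyticOrderAt (F n) a ≤ analyticOrderAt f a := by
  cases hfa : analyticOrderAt f a with
  | top => exact .of_forall fun _ => le_top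
  | coe n =>
    have hf_analytic : AnalyticAt ℂ f a :=
      (hf.differentiableOn hF hU).analyticAt (hU.mem_nhds ha)
    have hderiv : _root_.iteratedDeriv n f a ≠ 0 :=
      ((analyticOrderAt_eq_nat_iff_iteratedDeriv_eq_zero hf_analytic).mp hfa).2
    filter_upwards [hF, ((hf.iteratedDeriv hF hU n).tendsto_at ha).eventually_ne hderiv]
      with j hFj hj
    exact analyticOrderAt_le_of_iteratedDeriv_ne_zero (hFj.analyticAt (hU.mem_nhds ha)) hj

end LocallyUniformLimit

theorem limsup_order_le_order_general
    (U : Set ℂ) (hU : IsOpen U) (a : ℂ) (ha : a ∈ U)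
    (f : ℂ → ℂ) (fj : ℕ → ℂ → ℂ)
    (hfj : ∀ j : ℕ, ∀ z ∈ U, AnalyticAt ℂ (fj j) z)
    (hconv : ∀ K ⊆ U, IsCompact K → TendstoUniformlyOn fj f Filter.atTop K) :
    Filter.limsup (fun j => analyticOrderAt (fj j) a) Filter.atTop ≤ analyticOrderAt f a := by
  have hlim : TendstoLocallyUniformlyOn fj f atTop U :=
    (tendstoLocallyUniformlyOn_iff_forall_isCompact hU).mpr hconv
  have hholo : ∀ᶠ j in atTop, DifferentiableOn ℂ (fj j) U :=
    .of_forall fun j => AnalyticOnNhd.differentiableOn (hfj j)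
  exact limsup_le_of_le (by isBoundedDefault) (hlim.eventually_analyticOrderAt_le hholo hU ha)

/-- **Upper semicontinuity of the order of vanishing.**  If `f` and the `f j` are
analytic on an open set `U ⊆ ℂ`, `a ∈ U`, and `f j → f` uniformly on every compact
subset of `U`, then `limsup_j ord_a (f j) ≤ ord_a f` in `ℕ∞`. -/
theorem limsup_order_le_order
    (U : Set ℂ) (hU : IsOpen U) (a : ℂ) (ha : a ∈ U)
    (f : ℂ → ℂ) (fj : ℕ → ℂ → ℂ)
    (hf : ∀ z ∈ U, AnalyticAt ℂ f z)
    (hfj : ∀ j : ℕ, ∀ z ∈ U, AnalyticAt ℂ (fj j) z)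
    (hconv : ∀ K ⊆ U, IsCompact K → TendstoUniformlyOn fj f Filter.atTop K) :
    Filter.limsup (fun j => analyticOrderAt (fj j) a) Filter.atTop ≤ analyticOrderAt f a :=
  limsup_order_le_order_general U hU a ha f fj hfj hconv
end
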